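/- (Hamiltonian of the untwisted Givental field, Faber–Pandharipande form.) Fix an integer d ≥ 1 and let M be the operator of multiplication by (B_{d+1}/(d+1)!) z^d on ℋ = H((z⁻¹)), where B_{d+1} is the (d+1)st Bernoulli number. Then for every f ∈ ℋ: (1/2) ω(Mf, f) = (B_{d+1}/(d+1)!) [ − Σ_{a≥0, μ} q_a^μ(f) p_{a+d, μ}(f) + (1/2) Σ_{a+a'=d−1, a,a'≥0, μ, μ'} (−1)^{a'} g^{μμ'} p_{a,μ}(f) p_{a',μ'}(f) ]. -/

import Mathlib

/-! With `ψ k = (-1)^k g(f_{k-d}, f_{-1-k})` one has `ω(Mf, f) = (B_{d+1}/(d+1)!) Σ_k ψ k`.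
For even `d` the Bernoulli number vanishes. For odd `d`, the symmetry of `g` makes `ψ` invariant
under `k ↦ d - 1 - k`, which exchanges `k ≥ d` with `k < 0`, so
`Σ_k ψ k = 2 Σ_{k ≥ d} ψ k + Σ_{0 ≤ k < d} ψ k`. Expanding `f_a` in the basis turns the first sum
into `-2 Σ q_a p_{a+d}`, and the inverse Gram matrix turns `Σ g^{μμ'} p_{a,μ} p_{a',μ'}` back into
`± g(f_{-1-a}, f_{-1-a'})`, which identifies the second sum with the `p`-`p` term. -/

noncomputable section

/-- `f : ℤ → H` has coefficients vanishing for all sufficiently large `k`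
(finitely many positive powers of `z`). -/
def IsGivental {H : Type*} [AddCommGroup H] [Module ℚ H] (f : ℤ → H) : Prop :=
  ∃ N : ℤ, ∀ k : ℤ, N < k → f k = 0

/-- Givental's symplectic form `ω(f₁, f₂) = Σ_{k∈ℤ} (−1)^k g(f₁_k, f₂_{−1−k})`. -/
def giventalForm {H : Type*} [AddCommGroup H] [Module ℚ H]
    (g : H →ₗ[ℚ] H →ₗ[ℚ] ℚ) (f₁ f₂ : ℤ → H) : ℚ :=
  ∑ᶠ k : ℤ, (-1 : ℚ) ^ k * g (f₁ k) (f₂ (-1 - k))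

/-- The Darboux coordinate `q_a^μ(f)`: the `h_μ`-coordinate of the coefficient `f_a`. -/
def qCoord {H : Type*} [AddCommGroup H] [Module ℚ H] {ι : Type*}
    (b : Module.Basis ι ℚ H) (f : ℤ → H) (a : ℕ) (μ : ι) : ℚ :=
  b.repr (f a) μ

/-- The Darboux coordinate `p_{a,μ}(f) = (−1)^{a+1} g(f_{−1−a}, h_μ)`. -/
def pCoord {H : Type*} [AddCommGroup H] [Module ℚ H] {ι : Type*}
    (g : H →ₗ[ℚ] H →ₗ[ℚ] ℚ) (b : Module.Basis ι ℚ H) (f : ℤ → H) (a : ℕ) (μ : ι) : ℚ :=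
  (-1 : ℚ) ^ (a + 1) * g (f (-1 - a)) (b μ)

/-- Multiplication by `(B_{d+1}/(d+1)!) z^d` on `ℋ`, where `B_{d+1}` is the
`(d+1)`st Bernoulli number. -/
def giventalUntwistedField {H : Type*} [AddCommGroup H] [Module ℚ H]
    (d : ℕ) (f : ℤ → H) : ℤ → H :=
  fun k => (bernoulli (d + 1) / (Nat.factorial (d + 1) : ℚ)) • f (k - d)

open Function Finset

lemma Module.Basis.sum_repr_mul_apply_basis {R M N ι : Type*} [CommSemiring R] [AddCommMonoid M]
    [Module R M] [AddCommMonoid N] [Module R N] [Fintype ι] (g : N →ₗ[R] M →ₗ[R] R)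
    (b : Module.Basis ι R M) (u : M) (v : N) : ∑ μ, b.repr u μ * g v (b μ) = g v u := by
  conv_rhs => rw [← b.sum_repr u]
  simp [map_sum, -Module.Basis.sum_repr]

open Matrix in
lemma LinearMap.BilinForm.toMatrix_mulVec_repr {R M ι : Type*} [CommSemiring R]
    [AddCommMonoid M] [Module R M] [Fintype ι] [DecidableEq ι] (g : LinearMap.BilinForm R M)
    (b : Module.Basis ι R M) (v : M) : toMatrix b g *ᵥ b.repr v = fun μ => g (b μ) v := by
  ext μ
  simp [mulVec, dotProduct, mul_comm, ← b.sum_repr_mul_apply_basis g v (b μ)]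

open Matrix in
lemma LinearMap.BilinForm.sum_inv_toMatrix_mul_apply_mul_apply {K M ι : Type*} [Field K]
    [AddCommGroup M] [Module K M] [Fintype ι] [DecidableEq ι] {g : LinearMap.BilinForm K M}
    (hsymm : ∀ u v : M, g u v = g v u) (hg : g.Nondegenerate) (b : Module.Basis ι K M)
    (u v : M) :
    ∑ μ, ∑ μ', (toMatrix b g)⁻¹ μ μ' * g u (b μ) * g v (b μ') = g u v := by
  set G := toMatrix b g
  have hG : (fun μ => g v (b μ)) = G *ᵥ b.repr v := by
    rw [toMatrix_mulVec_repr]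
    exact funext fun μ => hsymm _ _
  have hGinv : G⁻¹ * G = 1 :=
    nonsing_inv_mul G (isUnit_iff_ne_zero.2 ((nondegenerate_iff_det_ne_zero b).1 hg))
  calc ∑ μ, ∑ μ', G⁻¹ μ μ' * g u (b μ) * g v (b μ')
      = (fun μ => g u (b μ)) ⬝ᵥ (G⁻¹ *ᵥ fun μ' => g v (b μ')) := by
        simp only [dotProduct, mulVec, Finset.mul_sum]
        exact Finset.sum_congr rfl fun _ _ => Finset.sum_congr rfl fun _ _ => by ring
    _ = (fun μ => g u (b μ)) ⬝ᵥ b.repr v := by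
        rw [hG, mulVec_mulVec, hGinv, one_mulVec]
    _ = g u v := by
        simp only [dotProduct, mul_comm (g u _), b.sum_repr_mul_apply_basis]

lemma finsum_int_eq_finsum_neg_add_sum_range_add_finsum {A : Type*} [AddCommMonoid A]
    {ψ : ℤ → A} (hψ : ψ.support.Finite) (d : ℕ) :
    ∑ᶠ k, ψ k = ∑ᶠ a : ℕ, ψ (-1 - a) + ∑ a ∈ range d, ψ a + ∑ᶠ a : ℕ, ψ (a + d) := by
  set low := Set.range fun a : ℕ => -1 - (a : ℤ)
  set mid := (Nat.cast : ℕ → ℤ) '' ↑(range d)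
  set high := Set.range fun a : ℕ => (a : ℤ) + d
  have hcover : low ∪ mid ∪ high = Set.univ := by
    refine Set.eq_univ_of_forall fun k => ?_
    simp only [low, mid, high, Set.mem_union, Set.mem_range, Set.mem_image, coe_range,
      Set.mem_Iio]
    rcases lt_or_ge k 0 with hk | hk
    · exact Or.inl (Or.inl ⟨(-1 - k).toNat, by omega⟩)
    rcases lt_or_ge k d with hkd | hkd
    · exact Or.inl (Or.inr ⟨k.toNat, by omega, by omega⟩)
    · exact Or.inr ⟨(k - d).toNat, by omega⟩
  have hlow_mid : Disjoint low mid := by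
    rw [Set.disjoint_left]
    rintro _ ⟨a, rfl⟩ ⟨a', -, h⟩
    dsimp only at h
    omega
  have hlow_high : Disjoint (low ∪ mid) high := by
    rw [Set.disjoint_left]
    rintro _ (⟨a, rfl⟩ | ⟨a', ha', rfl⟩) ⟨a'', h⟩
    · dsimp only at h
      omega
    · simp only [coe_range, Set.mem_Iio] at ha'
      dsimp only at h
      omega
  rw [← finsum_mem_univ, ← hcover, finsum_mem_union' hlow_high (hψ.inter_of_right _)
    (hψ.inter_of_right _), finsum_mem_union' hlow_mid (hψ.inter_of_right _)
    (hψ.inter_of_right _), finsum_mem_range (fun a b h => by simpa using h),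
    finsum_mem_range (fun a b h => by simpa using h),
    finsum_mem_image Nat.cast_injective.injOn, finsum_mem_coe_finset]

lemma finsum_int_eq_sum_range_add_two_nsmul_of_reflect {A : Type*} [AddCommMonoid A]
    {ψ : ℤ → A} (hψ : ψ.support.Finite) (d : ℕ) (hreflect : ∀ k, ψ (d - 1 - k) = ψ k) :
    ∑ᶠ k, ψ k = ∑ a ∈ range d, ψ a + 2 • ∑ᶠ a : ℕ, ψ (a + d) := by
  have hneg : ∀ a : ℕ, ψ (-1 - a) = ψ (a + d) := fun a => by
    rw [← hreflect]
    congr 1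
    ring
  rw [finsum_int_eq_finsum_neg_add_sum_range_add_finsum hψ d, finsum_congr hneg, two_nsmul]
  abel

lemma neg_one_zpow_sub_one_sub_of_odd {K : Type*} [DivisionRing K] {d : ℤ} (hd : Odd d) (k : ℤ) :
    (-1 : K) ^ (d - 1 - k) = (-1) ^ k := by
  obtain ⟨m, rfl⟩ := hd
  rw [show 2 * m + 1 - 1 - k = k + 2 * (m - k) by ring, zpow_add₀ (by norm_num), zpow_mul]
  simp

section Givental

variable {H : Type*} [AddCommGroup H] [Module ℚ H] (g : H →ₗ[ℚ] H →ₗ[ℚ] ℚ)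

def giventalFormTerm (f₁ f₂ : ℤ → H) (k : ℤ) : ℚ :=
  (-1) ^ k * g (f₁ k) (f₂ (-1 - k))

lemma giventalForm_eq_finsum_giventalFormTerm (f₁ f₂ : ℤ → H) :
    giventalForm g f₁ f₂ = ∑ᶠ k, giventalFormTerm g f₁ f₂ k :=
  rfl

lemma giventalForm_smul_left (c : ℚ) (f₁ f₂ : ℤ → H) :
    giventalForm g (c • f₁) f₂ = c * giventalForm g f₁ f₂ := by
  rw [giventalForm, giventalForm, mul_finsum]
  refine finsum_congr fun k => ?_
  simp only [Pi.smul_apply, map_smul, LinearMap.smul_apply, smul_eq_mul]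
  ring

lemma IsGivental.comp_sub {f : ℤ → H} (hf : IsGivental f) (d : ℤ) :
    IsGivental fun k => f (k - d) := by
  obtain ⟨N, hN⟩ := hf
  exact ⟨N + d, fun k hk => hN _ (by omega)⟩

lemma finite_support_giventalFormTerm {f₁ f₂ : ℤ → H} (hf₁ : IsGivental f₁)
    (hf₂ : IsGivental f₂) : (support (giventalFormTerm g f₁ f₂)).Finite := by
  obtain ⟨N₁, hN₁⟩ := hf₁
  obtain ⟨N₂, hN₂⟩ := hf₂
  refine (Set.finite_Icc (-1 - N₂) N₁).subset fun k hk => ?_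
  by_contra hk'
  rw [Set.mem_Icc, not_and_or, not_le, not_le] at hk'
  rcases hk' with hlow | hhigh
  · exact hk (by simp [giventalFormTerm, hN₂ (-1 - k) (by omega)])
  · exact hk (by simp [giventalFormTerm, hN₁ k hhigh])

lemma giventalFormTerm_comp_sub_reflect (hsymm : ∀ u v : H, g u v = g v u) {d : ℤ} (hd : Odd d)
    (f : ℤ → H) (k : ℤ) :
    giventalFormTerm g (fun k => f (k - d)) f (d - 1 - k) =
      giventalFormTerm g (fun k => f (k - d)) f k := by
  rw [giventalFormTerm, giventalFormTerm, neg_one_zpow_sub_one_sub_of_odd hd,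
    show d - 1 - k - d = -1 - k by ring, show -1 - (d - 1 - k) = k - d by ring, hsymm]

variable {ι : Type*} [Fintype ι] (b : Module.Basis ι ℚ H) (f : ℤ → H)

lemma sum_qCoord_mul_pCoord (a a' : ℕ) :
    ∑ μ, qCoord b f a μ * pCoord g b f a' μ = (-1) ^ (a' + 1) * g (f (-1 - a')) (f a) := by
  simp only [qCoord, pCoord, mul_left_comm _ ((-1 : ℚ) ^ _), ← Finset.mul_sum,
    b.sum_repr_mul_apply_basis]

lemma sum_qCoord_mul_pCoord_add_eq_neg_giventalFormTerm (hsymm : ∀ u v : H, g u v = g v u)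
    (d a : ℕ) :
    ∑ μ, qCoord b f a μ * pCoord g b f (a + d) μ =
      -giventalFormTerm g (fun k => f (k - d)) f (a + d) := by
  rw [sum_qCoord_mul_pCoord, hsymm, pow_succ, ← zpow_natCast]
  simp only [giventalFormTerm, Nat.cast_add, add_sub_cancel_right]
  ring

lemma sum_inv_toMatrix_mul_pCoord_mul_pCoord [DecidableEq ι] (hsymm : ∀ u v : H, g u v = g v u)
    (hg : LinearMap.BilinForm.Nondegenerate g) (a a' : ℕ) :
    ∑ μ, ∑ μ', (LinearMap.BilinForm.toMatrix b g)⁻¹ μ μ' * pCoord g b f a μ * pCoord g b f a' μ' =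
      (-1) ^ (a + a') * g (f (-1 - a)) (f (-1 - a')) := by
  rw [← LinearMap.BilinForm.sum_inv_toMatrix_mul_apply_mul_apply hsymm hg b, Finset.mul_sum]
  refine Finset.sum_congr rfl fun μ _ => ?_
  rw [Finset.mul_sum]
  refine Finset.sum_congr rfl fun μ' _ => ?_
  simp only [pCoord, pow_add]
  ring

lemma sum_inv_toMatrix_mul_pCoord_mul_pCoord_eq_giventalFormTerm [DecidableEq ι]
    (hsymm : ∀ u v : H, g u v = g v u) (hg : LinearMap.BilinForm.Nondegenerate g) {a d : ℕ}
    (had : a < d) :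
    ∑ μ, ∑ μ', (-1 : ℚ) ^ (d - 1 - a) * (LinearMap.BilinForm.toMatrix b g)⁻¹ μ μ' *
        pCoord g b f a μ * pCoord g b f (d - 1 - a) μ' =
      giventalFormTerm g (fun k => f (k - d)) f a := by
  have hsign : (-1 : ℚ) ^ (d - 1 - a) * (-1) ^ (a + (d - 1 - a)) = (-1) ^ a := by
    rw [← pow_add, show d - 1 - a + (a + (d - 1 - a)) = a + 2 * (d - 1 - a) by omega, pow_add,
      pow_mul, neg_one_sq, one_pow, mul_one]
  simp_rw [mul_assoc ((-1 : ℚ) ^ (d - 1 - a)), ← Finset.mul_sum]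
  rw [sum_inv_toMatrix_mul_pCoord_mul_pCoord g b f hsymm hg, ← mul_assoc, hsign,
    show (-1 : ℤ) - (d - 1 - a : ℕ) = a - d by omega, hsymm, giventalFormTerm, zpow_natCast]

end Givental

/-- The Hamiltonian of the untwisted Givental field (Faber–Pandharipande form):
`(1/2) ω(Mf, f) = (B_{d+1}/(d+1)!) [ − Σ_{a,μ} q_a^μ p_{a+d,μ}
  + (1/2) Σ_{a+a'=d−1,μ,μ'} (−1)^{a'} g^{μμ'} p_{a,μ} p_{a',μ'} ]`. -/
theorem giventalUntwistedField_hamiltonian {H : Type*} [AddCommGroup H] [Module ℚ H]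
    [FiniteDimensional ℚ H] {ι : Type*} [Fintype ι] [DecidableEq ι]
    (g : H →ₗ[ℚ] H →ₗ[ℚ] ℚ)
    (hsymm : ∀ u v : H, g u v = g v u)
    (hnondeg : ∀ u : H, (∀ v : H, g u v = 0) → u = 0)
    (b : Module.Basis ι ℚ H)
    (d : ℕ) (hd : 1 ≤ d)
    (f : ℤ → H) (hf : IsGivental f) :
    letI G : Matrix ι ι ℚ := Matrix.of fun μ μ' => g (b μ) (b μ')
    (1 / 2 : ℚ) * giventalForm g (giventalUntwistedField d f) f =
      (bernoulli (d + 1) / (Nat.factorial (d + 1) : ℚ)) *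
        (-(∑ᶠ a : ℕ, ∑ μ : ι, qCoord b f a μ * pCoord g b f (a + d) μ) +
          (1 / 2 : ℚ) * ∑ a ∈ Finset.range d, ∑ μ : ι, ∑ μ' : ι,
            (-1 : ℚ) ^ (d - 1 - a) * (G⁻¹ μ μ') *
              pCoord g b f a μ * pCoord g b f (d - 1 - a) μ') := by
  have hG : (Matrix.of fun μ μ' => g (b μ) (b μ')) = LinearMap.BilinForm.toMatrix b g := by
    ext; simp
  have hg : LinearMap.BilinForm.Nondegenerate g :=
    LinearMap.BilinForm.Nondegenerate.ofSeparatingLeft hnondeg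
  set c := bernoulli (d + 1) / (Nat.factorial (d + 1) : ℚ)
  have hM : giventalUntwistedField d f = c • fun k => f (k - d) := rfl
  rw [hG, hM, giventalForm_smul_left, giventalForm_eq_finsum_giventalFormTerm]
  rcases Nat.even_or_odd d with hev | hodd
  · have hc : c = 0 := by simp [c, bernoulli_eq_zero_of_odd hev.add_one (by omega)]
    simp [hc]
  rw [finsum_int_eq_sum_range_add_two_nsmul_of_reflect
      (finite_support_giventalFormTerm g (hf.comp_sub d) hf) d
      (giventalFormTerm_comp_sub_reflect g hsymm hodd.natCast f),
    finsum_congr (sum_qCoord_mul_pCoord_add_eq_neg_giventalFormTerm g b f hsymm d),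
    finsum_neg_distrib, Finset.sum_congr rfl fun a ha =>
      sum_inv_toMatrix_mul_pCoord_mul_pCoord_eq_giventalFormTerm g b f hsymm hg (mem_range.1 ha)]
  ring
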